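/- Resource bisimilarity ≃ is the largest congruence included in bisimilarity ∼ that is also a bisimulation; in particular ≃ ⊆ ≈ ⊆ ∼. -/

import Mathlib

/-- A labeled Petri net: places `P`, transitions `T`, action labels `Act`. -/
structure LPN (P T Act : Type) where
  pre : T → P → ℕ
  post : T → P → ℕ
  lab : T → Act

variable {P T Act : Type}

/-- Firing relation: `M` fires `t` yielding `M'`. -/
def Fires (N : LPN P T Act) (M : P → ℕ) (t : T) (M' : P → ℕ) : Prop :=
  N.pre t ≤ M ∧ M' = fun p => M p - N.pre t p + N.post t p

/-- `R` satisfies the (ordinary) transfer property w.r.t. `R'`. -/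
def Transfer (N : LPN P T Act) (R R' : (P → ℕ) → (P → ℕ) → Prop) : Prop :=
  ∀ M₁ M₂, R M₁ M₂ → ∀ t M₁', Fires N M₁ t M₁' →
    ∃ u M₂', N.lab u = N.lab t ∧ Fires N M₂ u M₂' ∧ R' M₁' M₂'

/-- `R` is a bisimulation. -/
def IsBisim (N : LPN P T Act) (R : (P → ℕ) → (P → ℕ) → Prop) : Prop :=
  Transfer N R R ∧ Transfer N (fun a b => R b a) (fun a b => R b a)

/-- Bisimilarity `∼`. -/
def Bisim (N : LPN P T Act) (M₁ M₂ : P → ℕ) : Prop :=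
  ∃ R, IsBisim N R ∧ R M₁ M₂

/-- A congruence on markings: an equivalence compatible with addition. -/
def IsCongruence (ρ : (P → ℕ) → (P → ℕ) → Prop) : Prop :=
  Equivalence ρ ∧ ∀ r₁ r₂ s, ρ r₁ r₂ → ρ (r₁ + s) (r₂ + s)

/-- Resource similarity `≈`. -/
def ResSim (N : LPN P T Act) (r s : P → ℕ) : Prop :=
  ∀ w, Bisim N (r + w) (s + w)

/-- `R` satisfies the resource transfer property w.r.t. `R'`. -/
def ResTransfer (N : LPN P T Act) (R R' : (P → ℕ) → (P → ℕ) → Prop) : Prop :=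
  ∀ r s, R r s → ∀ t r', Fires N (fun p => r p + (N.pre t p - r p)) t r' →
    ∃ u s', N.lab u = N.lab t ∧
      Fires N (fun p => s p + (N.pre t p - r p)) u s' ∧ R' r' s'

/-- `R` is a resource bisimulation. -/
def IsResBisim (N : LPN P T Act) (R : (P → ℕ) → (P → ℕ) → Prop) : Prop :=
  ResTransfer N R R ∧ ResTransfer N (fun a b => R b a) (fun a b => R b a)

/-- Resource bisimilarity `≃`. -/
def ResBisim (N : LPN P T Act) (r s : P → ℕ) : Prop :=
  ∃ R, IsResBisim N R ∧ R r s

/-- Stratified bisimilarity `∼ᵢ`. -/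
def Strat (N : LPN P T Act) : ℕ → (P → ℕ) → (P → ℕ) → Prop
  | 0, _, _ => True
  | i + 1, M₁, M₂ =>
      (∀ t M₁', Fires N M₁ t M₁' →
        ∃ u M₂', N.lab u = N.lab t ∧ Fires N M₂ u M₂' ∧ Strat N i M₁' M₂') ∧
      (∀ t M₂', Fires N M₂ t M₂' →
        ∃ u M₁', N.lab u = N.lab t ∧ Fires N M₁ u M₁' ∧ Strat N i M₂' M₁')

/-- Stratified resource bisimilarity `≃ᵢ`. -/
def StratRes (N : LPN P T Act) : ℕ → (P → ℕ) → (P → ℕ) → Prop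
  | 0, _, _ => True
  | i + 1, r, s =>
      (∀ t r', Fires N (fun p => r p + (N.pre t p - r p)) t r' →
        ∃ u s', N.lab u = N.lab t ∧
          Fires N (fun p => s p + (N.pre t p - r p)) u s' ∧ StratRes N i r' s') ∧
      (∀ t s', Fires N (fun p => s p + (N.pre t p - s p)) t s' →
        ∃ u r', N.lab u = N.lab t ∧
          Fires N (fun p => r p + (N.pre t p - s p)) u r' ∧ StratRes N i s' r')

/-- The equivalence level: the largest `i` with `r ≃ᵢ s` (`⊤` = ω if all `i`). -/
noncomputable def eqlev (N : LPN P T Act) (r s : P → ℕ) : ℕ∞ :=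
  sSup {n : ℕ∞ | ∃ i : ℕ, n = (i : ℕ∞) ∧ StratRes N i r s}

/-!
An additive bisimulation is a resource bisimulation: the missing tokens `pre t - r` may simply be
added to both sides. Conversely, the additive closure `{(r + w, s + w) | R r s}` of a resource
bisimulation `R` is a bisimulation, hence (being additive) again a resource bisimulation. So `≃` is
additive and a bisimulation; being closed under composition of additive bisimulations, it is also
transitive.
-/

inductive AddClosure {α : Type*} [Add α] (R : α → α → Prop) : α → α → Prop
  | mk (r s w : α) : R r s → AddClosure R (r + w) (s + w)

namespace AddClosure

variable {α : Type*} {R : α → α → Prop}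

theorem add_right [AddSemigroup α] {a b : α} (h : AddClosure R a b) (e : α) :
    AddClosure R (a + e) (b + e) := by
  obtain ⟨r, s, w, hrs⟩ := h
  simpa only [add_assoc] using mk r s (w + e) hrs

theorem of_rel [AddZeroClass α] {a b : α} (h : R a b) : AddClosure R a b := by
  simpa only [add_zero] using mk a b 0 h

theorem flip_eq [Add α] : flip (AddClosure R) = AddClosure (flip R) := by
  ext a b
  constructor
  · rintro ⟨r, s, w, h⟩
    exact mk s r w h
  · rintro ⟨r, s, w, h⟩
    exact mk s r w h

theorem eq_self [AddZeroClass α] (hadd : ∀ r s w, R r s → R (r + w) (s + w)) :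
    AddClosure R = R := by
  ext a b
  constructor
  · rintro ⟨r, s, w, h⟩
    exact hadd r s w h
  · exact of_rel

end AddClosure

section

variable {N : LPN P T Act} {M M' : P → ℕ} {t : T}

theorem Fires.add_right (h : Fires N M t M') (e : P → ℕ) : Fires N (M + e) t (M' + e) := by
  obtain ⟨hle, rfl⟩ := h
  refine ⟨le_add_right hle, funext fun p => ?_⟩
  have hp : N.pre t p ≤ M p := hle p
  simp only [Pi.add_apply]
  omega

theorem Fires.unique {M'' : P → ℕ} (h : Fires N M t M') (h' : Fires N M t M'') : M' = M'' :=
  h.2.trans h'.2.symm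

variable {R R' R₁ R₂ : (P → ℕ) → (P → ℕ) → Prop}

theorem Transfer.comp (h₁ : Transfer N R₁ R₁) (h₂ : Transfer N R₂ R₂) :
    Transfer N (Relation.Comp R₁ R₂) (Relation.Comp R₁ R₂) := by
  rintro M₁ M₃ ⟨M₂, h₁₂, h₂₃⟩ t M₁' hM₁
  obtain ⟨u, M₂', hu, hM₂, h₁₂'⟩ := h₁ M₁ M₂ h₁₂ t M₁' hM₁
  obtain ⟨v, M₃', hv, hM₃, h₂₃'⟩ := h₂ M₂ M₃ h₂₃ u M₂' hM₂
  exact ⟨v, M₃', hv.trans hu, hM₃, M₂', h₁₂', h₂₃'⟩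

theorem IsBisim.comp (h₁ : IsBisim N R₁) (h₂ : IsBisim N R₂) :
    IsBisim N (Relation.Comp R₁ R₂) := by
  refine ⟨h₁.1.comp h₂.1, ?_⟩
  change Transfer N (flip (Relation.Comp R₁ R₂)) (flip (Relation.Comp R₁ R₂))
  rw [Relation.flip_comp]
  exact h₂.2.comp h₁.2

/-- Firing `t` from `r + w` only needs the tokens `d = pre t - r ≤ w` that `r` lacks, so the
move of `r + d` granted by the resource transfer property lifts to `(r + d) + (w - d)`. -/
theorem ResTransfer.transfer_addClosure (h : ResTransfer N R R') :
    Transfer N (AddClosure R) (AddClosure R') := by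
  rintro _ _ ⟨r, s, w, hrs⟩ t M₁' hM₁
  set d := N.pre t - r
  have hw (x : P → ℕ) : x + w = x + d + (w - d) := by
    rw [add_assoc, add_tsub_cancel_of_le (tsub_le_iff_left.2 hM₁.1)]
  have hr : Fires N (r + d) t (r + d - N.pre t + N.post t) := ⟨le_add_tsub, rfl⟩
  obtain ⟨u, s', hu, hs, hR'⟩ := h r s hrs t _ hr
  refine ⟨u, s' + (w - d), hu, ?_, ?_⟩
  · rw [hw]
    exact hs.add_right _
  · have hr' := hr.add_right (w - d)
    rw [← hw] at hr'
    rw [hM₁.unique hr']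
    exact AddClosure.mk _ _ _ hR'

theorem Transfer.resTransfer (hadd : ∀ r s w, R r s → R (r + w) (s + w))
    (h : Transfer N R R') : ResTransfer N R R' :=
  fun r s hrs t r' hr => h _ _ (hadd r s (N.pre t - r) hrs) t r' hr

theorem IsBisim.isResBisim (hadd : ∀ r s w, R r s → R (r + w) (s + w)) (h : IsBisim N R) :
    IsResBisim N R :=
  ⟨h.1.resTransfer hadd, h.2.resTransfer fun r s w hrs => hadd s r w hrs⟩

theorem IsResBisim.isBisim_addClosure (h : IsResBisim N R) : IsBisim N (AddClosure R) := by
  refine ⟨h.1.transfer_addClosure, ?_⟩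
  change Transfer N (flip (AddClosure R)) (flip (AddClosure R))
  rw [AddClosure.flip_eq]
  exact h.2.transfer_addClosure

theorem IsResBisim.addClosure (h : IsResBisim N R) : IsResBisim N (AddClosure R) :=
  h.isBisim_addClosure.isResBisim fun _ _ w hrs => hrs.add_right w

theorem IsResBisim.isBisim (hadd : ∀ r s w, R r s → R (r + w) (s + w)) (h : IsResBisim N R) :
    IsBisim N R :=
  AddClosure.eq_self hadd ▸ h.isBisim_addClosure

theorem isResBisim_eq : IsResBisim N Eq :=
  ⟨fun _ _ hrs t r' hr => ⟨t, r', rfl, hrs ▸ hr, rfl⟩,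
    fun _ _ hsr t s' hs => ⟨t, s', rfl, hsr ▸ hs, rfl⟩⟩

theorem isResBisim_resBisim : IsResBisim N (ResBisim N) := by
  constructor
  · rintro r s ⟨R, hR, hrs⟩ t r' hr
    obtain ⟨u, s', hu, hs, hrs'⟩ := hR.1 r s hrs t r' hr
    exact ⟨u, s', hu, hs, R, hR, hrs'⟩
  · rintro r s ⟨R, hR, hsr⟩ t r' hr
    obtain ⟨u, s', hu, hs, hsr'⟩ := hR.2 r s hsr t r' hr
    exact ⟨u, s', hu, hs, R, hR, hsr'⟩

theorem ResBisim.add_right {r s : P → ℕ} (h : ResBisim N r s) (w : P → ℕ) :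
    ResBisim N (r + w) (s + w) :=
  ⟨AddClosure (ResBisim N), isResBisim_resBisim.addClosure, AddClosure.mk r s w h⟩

theorem isBisim_resBisim : IsBisim N (ResBisim N) :=
  isResBisim_resBisim.isBisim fun _ _ w h => h.add_right w

theorem ResBisim.trans {r s q : P → ℕ} (h₁ : ResBisim N r s) (h₂ : ResBisim N s q) :
    ResBisim N r q :=
  ⟨Relation.Comp (ResBisim N) (ResBisim N),
    (isBisim_resBisim.comp isBisim_resBisim).isResBisim
      fun _ _ w ⟨b, hab, hbc⟩ => ⟨b + w, hab.add_right w, hbc.add_right w⟩,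
    s, h₁, h₂⟩

theorem isCongruence_resBisim : IsCongruence (ResBisim N) :=
  ⟨⟨fun _ => ⟨Eq, isResBisim_eq, rfl⟩, fun ⟨R, hR, hrs⟩ => ⟨flip R, ⟨hR.2, hR.1⟩, hrs⟩,
      ResBisim.trans⟩,
    fun _ _ w h => h.add_right w⟩

end

/-- Resource bisimilarity `≃` is the largest congruence included in bisimilarity `∼` that is
also a bisimulation; in particular `≃ ⊆ ≈ ⊆ ∼`. -/
theorem resBisim_largest_congruence_bisim (N : LPN P T Act) :
    IsCongruence (ResBisim N) ∧
    IsBisim N (ResBisim N) ∧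
    (∀ r s : P → ℕ, ResBisim N r s → ResSim N r s) ∧
    (∀ r s : P → ℕ, ResSim N r s → Bisim N r s) ∧
    (∀ ρ, IsCongruence ρ → (∀ r s : P → ℕ, ρ r s → Bisim N r s) → IsBisim N ρ →
      ∀ r s, ρ r s → ResBisim N r s) := by
  refine ⟨isCongruence_resBisim, isBisim_resBisim, ?_, ?_, ?_⟩
  · exact fun r s h w => ⟨ResBisim N, isBisim_resBisim, h.add_right w⟩
  · intro r s h
    simpa only [add_zero] using h 0
  · rintro ρ ⟨-, hadd⟩ - hρ r s hrs
    exact ⟨ρ, hρ.isResBisim hadd, hrs⟩
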